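/- For any two connected simple graphs G and H, the distinguishing number of the lexicographic product satisfies D(G[H]) ≤ D(G)·D(H). -/

import Mathlib

open SimpleGraph

/-- The lexicographic product of two simple graphs. -/
def lexProd {V W : Type*} (G : SimpleGraph V) (H : SimpleGraph W) :
    SimpleGraph (V × W) where
  Adj p q := G.Adj p.1 q.1 ∨ (p.1 = q.1 ∧ H.Adj p.2 q.2)
  symm := by
    constructor
    rintro p q (h | ⟨h1, h2⟩)
    · exact Or.inl h.symm
    · exact Or.inr ⟨h1.symm, h2.symm⟩
  loopless := by
    constructor
    rintro p (h | ⟨_, h⟩)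
    · exact G.irrefl h
    · exact H.irrefl h

/-- The distinguishing number: the least `d` such that there is a vertex labeling with `d`
labels preserved only by the identity automorphism. -/
noncomputable def distinguishingNumber {V : Type*} (G : SimpleGraph V) : ℕ :=
  sInf {d : ℕ | ∃ φ : V → Fin d,
    ∀ σ : G ≃g G, (∀ v, φ (σ v) = φ v) → ∀ v, σ v = v}

/-- The distinguishing index: the least `d` such that there is an edge labeling with `d`
labels preserved only by the identity automorphism. -/
noncomputable def distinguishingIndex {V : Type*} (G : SimpleGraph V) : ℕ :=
  sInf {d : ℕ | ∃ ψ : G.edgeSet → Fin d,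
    ∀ σ : G ≃g G, (∀ e, ψ (σ.mapEdgeSet e) = ψ e) → ∀ v, σ v = v}

/-- Every automorphism of `G[H]` is of wreath form, i.e. `Aut(G[H]) = Aut(G)[Aut(H)]`. -/
def wreathForm {V W : Type*} (G : SimpleGraph V) (H : SimpleGraph W) : Prop :=
  ∀ f : lexProd G H ≃g lexProd G H,
    ∃ (α : G ≃g G) (β : V → (H ≃g H)),
      ∀ p : V × W, f p = (α p.1, β (α p.1) p.2)

/-! A distinguishing labeling `φ` of `G` and `ψ` of `H` combine to the labeling `(φ a, ψ x)` of
`G[H]`. An automorphism `σ` of `G[H]` preserving it must map every fiber `{a} × W` into a single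
fiber: if two points of one fiber went to different fibers `u ≠ u'`, then, as the fibers are
finite, `u` and `u'` would be twins in `G`, and swapping two twins of the same `φ`-label is a
nontrivial automorphism fixing `φ`. So `σ` induces a
`φ`-preserving automorphism of `G`, which is the identity, and then a `ψ`-preserving automorphism
of `H` on each fiber, which is the identity too. -/

section LexProd

variable {V W : Type*} {G : SimpleGraph V} {H : SimpleGraph W}

@[simp]
theorem lexProd_adj {p q : V × W} :
    (lexProd G H).Adj p q ↔ G.Adj p.1 q.1 ∨ (p.1 = q.1 ∧ H.Adj p.2 q.2) :=
  Iff.rfl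

theorem lexProd_adj_left {s t : V} {x : W} :
    (lexProd G H).Adj (s, x) (t, x) ↔ G.Adj s t := by
  simp

theorem lexProd_adj_right {v : V} {x y : W} :
    (lexProd G H).Adj (v, x) (v, y) ↔ H.Adj x y := by
  simp

theorem lexProd_fst_eq_of_adj_of_not_adj {p : V × W} {v : V} {x x' : W}
    (h : (lexProd G H).Adj p (v, x)) (h' : ¬(lexProd G H).Adj p (v, x')) : p.1 = v := by
  simp only [lexProd_adj] at h h'
  tauto

theorem lexProd_iso_adj_fst_of_adj_fst [Finite W] (σ : lexProd G H ≃g lexProd G H) {v w : V}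
    {x x' : W} (hwu : w ≠ (σ (v, x)).1) (hwu' : w ≠ (σ (v, x')).1)
    (hadj : G.Adj w (σ (v, x)).1) : G.Adj w (σ (v, x')).1 := by
  by_contra hnadj
  have hfiber : ∀ z, (σ.symm (w, z)).1 = v := fun z =>
    lexProd_fst_eq_of_adj_of_not_adj
      (by rw [← σ.symm_apply_apply (v, x), σ.symm.map_adj_iff]; exact Or.inl hadj)
      (by
        rw [← σ.symm_apply_apply (v, x'), σ.symm.map_adj_iff]
        rintro (h | ⟨h, -⟩) <;> contradiction)
  have hinj : Function.Injective fun z => (σ.symm (w, z)).2 := fun z z' h => by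
    simpa using σ.symm.injective (Prod.ext ((hfiber z).trans (hfiber z').symm) h)
  -- `σ⁻¹` maps the whole fiber over `w` onto the fiber over `v`, so `(v, x)` comes from it.
  obtain ⟨z, hz⟩ := Finite.surjective_of_injective hinj x
  have hpre : σ.symm (w, z) = (v, x) := Prod.ext (hfiber z) hz
  exact hwu (by rw [← hpre, σ.apply_symm_apply])

end LexProd

namespace SimpleGraph

variable {V W α β : Type*} {G : SimpleGraph V} {H : SimpleGraph W}

def IsDistinguishing (G : SimpleGraph V) (φ : V → α) : Prop :=
  ∀ σ : G ≃g G, (∀ v, φ (σ v) = φ v) → ∀ v, σ v = v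

theorem isDistinguishing_of_injective {φ : V → α} (hφ : φ.Injective) : G.IsDistinguishing φ :=
  fun _ hσ v => hφ (hσ v)

theorem IsDistinguishing.comp_injective {φ : V → α} (hφ : G.IsDistinguishing φ) {e : α → β}
    (he : e.Injective) : G.IsDistinguishing (e ∘ φ) :=
  fun σ hσ => hφ σ fun v => he (hσ v)

theorem exists_isDistinguishing_fin_distinguishingNumber [Finite V] (G : SimpleGraph V) :
    ∃ φ : V → Fin (distinguishingNumber G), G.IsDistinguishing φ :=
  Nat.sInf_mem (s := {d | ∃ φ : V → Fin d, G.IsDistinguishing φ})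
    ⟨Nat.card V, Finite.equivFin V, isDistinguishing_of_injective (Equiv.injective _)⟩

theorem distinguishingNumber_le {d : ℕ} {φ : V → Fin d} (hφ : G.IsDistinguishing φ) :
    distinguishingNumber G ≤ d :=
  Nat.sInf_le ⟨φ, hφ⟩

theorem IsDistinguishing.eq_of_twins {φ : V → α} (hφ : G.IsDistinguishing φ) {u u' : V}
    (hlabel : φ u = φ u') (htwins : ∀ w, w ≠ u → w ≠ u' → (G.Adj w u ↔ G.Adj w u')) :
    u = u' := by
  classical
  have hswap : ∀ s t, G.Adj (Equiv.swap u u' s) (Equiv.swap u u' t) ↔ G.Adj s t := by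
    intro s t
    have hts := htwins s
    have htt := htwins t
    simp only [Equiv.swap_apply_def]
    split_ifs <;> subst_vars <;> simp_all [G.adj_comm]
  have := hφ ⟨Equiv.swap u u', hswap _ _⟩ (fun v => by
    rcases eq_or_ne v u with rfl | hu
    · simp [hlabel]
    rcases eq_or_ne v u' with rfl | hu'
    · simp [hlabel]
    · simp [Equiv.swap_apply_of_ne_of_ne hu hu']) u
  simpa using this.symm

theorem IsDistinguishing.fst_lexProd_iso_eq [Finite W] {φ : V → α}
    (hφ : G.IsDistinguishing φ) (σ : lexProd G H ≃g lexProd G H)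
    (hσ : ∀ p, φ (σ p).1 = φ p.1) (v : V) (x x' : W) : (σ (v, x)).1 = (σ (v, x')).1 :=
  hφ.eq_of_twins ((hσ (v, x)).trans (hσ (v, x')).symm) fun _ hw hw' =>
    ⟨lexProd_iso_adj_fst_of_adj_fst σ hw hw', lexProd_iso_adj_fst_of_adj_fst σ hw' hw⟩

theorem IsDistinguishing.fst_lexProd_iso [Finite V] [Finite W] {φ : V → α}
    (hφ : G.IsDistinguishing φ) (σ : lexProd G H ≃g lexProd G H)
    (hσ : ∀ p, φ (σ p).1 = φ p.1) (p : V × W) : (σ p).1 = p.1 := by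
  set f : V → V := fun v => (σ (v, p.2)).1
  have hf : ∀ q : V × W, (σ q).1 = f q.1 := fun q => hφ.fst_lexProd_iso_eq σ hσ q.1 q.2 p.2
  have hbij : f.Bijective := Finite.injective_iff_bijective.mp <| Finite.injective_iff_surjective.mpr
    fun u => ⟨(σ.symm (u, p.2)).1, by rw [← hf, σ.apply_symm_apply]⟩
  have hadj : ∀ s t, G.Adj (f s) (f t) ↔ G.Adj s t := by
    intro s t
    have h := σ.map_adj_iff (v := (s, p.2)) (w := (t, p.2))
    rw [lexProd_adj_left, lexProd_adj, hf (s, p.2), hf (t, p.2)] at h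
    rw [← h]
    by_cases hst : s = t
    · subst hst; simp
    · simp [hbij.1.ne hst]
  exact (hf p).trans (hφ ⟨Equiv.ofBijective f hbij, hadj _ _⟩ (fun v => hσ (v, p.2)) p.1)

theorem IsDistinguishing.lexProd [Finite V] [Finite W] {φ : V → α} {ψ : W → β}
    (hφ : G.IsDistinguishing φ) (hψ : H.IsDistinguishing ψ) :
    (lexProd G H).IsDistinguishing fun p => (φ p.1, ψ p.2) := by
  intro σ hσ p
  have hfst := hφ.fst_lexProd_iso σ fun q => congrArg Prod.fst (hσ q)
  set g : W → W := fun y => (σ (p.1, y)).2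
  have hg : ∀ y, σ (p.1, y) = (p.1, g y) := fun y => Prod.ext (hfst _) rfl
  have hinj : g.Injective := fun y y' h => by
    simpa using σ.injective (show σ (p.1, y) = σ (p.1, y') by rw [hg, hg, h])
  have hadj : ∀ s t, H.Adj (g s) (g t) ↔ H.Adj s t := fun s t => by
    rw [← lexProd_adj_right (G := G) (v := p.1), ← hg, ← hg, σ.map_adj_iff,
      lexProd_adj_right]
  have hsnd : g p.2 = p.2 :=
    hψ ⟨Equiv.ofBijective g (Finite.injective_iff_bijective.mp hinj), hadj _ _⟩
      (fun y => congrArg Prod.snd (hσ (p.1, y))) p.2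
  exact Prod.ext (hfst p) hsnd

end SimpleGraph

theorem stmt1_general {V W : Type*} [Fintype V] [Fintype W]
    (G : SimpleGraph V) (H : SimpleGraph W) :
    distinguishingNumber (lexProd G H) ≤
      distinguishingNumber G * distinguishingNumber H := by
  obtain ⟨φ, hφ⟩ := G.exists_isDistinguishing_fin_distinguishingNumber
  obtain ⟨ψ, hψ⟩ := H.exists_isDistinguishing_fin_distinguishingNumber
  exact distinguishingNumber_le ((hφ.lexProd hψ).comp_injective finProdFinEquiv.injective)

theorem stmt1 {V W : Type*} [Fintype V] [Fintype W]
    (G : SimpleGraph V) (H : SimpleGraph W)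
    (hG : G.Connected) (hH : H.Connected) :
    distinguishingNumber (lexProd G H) ≤
      distinguishingNumber G * distinguishingNumber H :=
  stmt1_general G H
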